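/- If a reflection t appears as a coordinate of the label of some maximal chain of an interval [u, v] in NC_W(γ), then t = u⁻¹u' for some element u' with u' covering u in [u, v]. -/

import Mathlib

open scoped RealInnerProductSpace
open Module

noncomputable section

variable {V : Type*} [NormedAddCommGroup V] [InnerProductSpace ℝ V]

/-- `g` acts as the orthogonal reflection in the hyperplane orthogonal to `α`. -/
def reflFormula (α : V) (g : V ≃ₗᵢ[ℝ] V) : Prop :=
  ∀ v, g v = v - (2 * ⟪α, v⟫ / ⟪α, α⟫) • α

/-- `g` is an orthogonal reflection. -/
def IsReflection (g : V ≃ₗᵢ[ℝ] V) : Prop :=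
  ∃ α : V, α ≠ 0 ∧ reflFormula α g

/-- A finite real reflection group: a finite subgroup of the orthogonal group
generated by its reflections. -/
def IsReflectionGroup (W : Subgroup (V ≃ₗᵢ[ℝ] V)) : Prop :=
  Finite W ∧ Subgroup.closure {g | g ∈ W ∧ IsReflection g} = W

/-- Reflection length: the least `k` such that `w` is a product of `k` reflections. -/
def refLen (W : Subgroup (V ≃ₗᵢ[ℝ] V)) (w : W) : ℕ :=
  sInf {k | ∃ l : List W, l.length = k ∧ (∀ t ∈ l, IsReflection (t : W).1) ∧ l.prod = w}

/-- The absolute order on `W`. -/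
def absLe (W : Subgroup (V ≃ₗᵢ[ℝ] V)) (u v : W) : Prop :=
  refLen W u + refLen W (u⁻¹ * v) = refLen W v

/-- Covering relation of the absolute order. -/
def covers (W : Subgroup (V ≃ₗᵢ[ℝ] V)) (u v : W) : Prop :=
  absLe W u v ∧ u ≠ v ∧ ∀ z, absLe W u z → absLe W z v → z = u ∨ z = v

/-- The fixed subspace of an isometry. -/
def fixedSpace (g : V ≃ₗᵢ[ℝ] V) : Submodule ℝ V where
  carrier := {v | g v = v}
  add_mem' := by
    intro a b ha hb
    simp only [Set.mem_setOf_eq, map_add] at *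
    rw [ha, hb]
  zero_mem' := by simp
  smul_mem' := by
    intro c a ha
    simp only [Set.mem_setOf_eq, map_smul] at *
    rw [ha]

/-- A root system for the reflection group `W`. -/
def IsRootSystemFor (W : Subgroup (V ≃ₗᵢ[ℝ] V)) (Φ : Set V) : Prop :=
  Φ.Finite ∧ (∀ α ∈ Φ, α ≠ 0) ∧ (∀ α ∈ Φ, -α ∈ Φ) ∧
  (∀ α ∈ Φ, ∀ c : ℝ, c • α ∈ Φ → c = 1 ∨ c = -1) ∧
  (∀ α ∈ Φ, ∃ t ∈ W, reflFormula α t) ∧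
  (∀ t ∈ W, IsReflection t → ∃ α ∈ Φ, reflFormula α t) ∧
  (∀ g ∈ W, ∀ α ∈ Φ, g α ∈ Φ)

/-- A simple system for `Φ`: roots `σ 1, …, σ ℓ` which are linearly independent and
such that every root is a nonnegative or nonpositive combination of them. -/
def IsSimpleSystem (Φ : Set V) {ℓ : ℕ} (σ : Fin ℓ → V) : Prop :=
  (∀ i, σ i ∈ Φ) ∧ LinearIndependent ℝ σ ∧
  ∀ α ∈ Φ, (∃ c : Fin ℓ → ℝ, (∀ i, 0 ≤ c i) ∧ α = ∑ i, c i • σ i) ∨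
           (∃ c : Fin ℓ → ℝ, (∀ i, 0 ≤ c i) ∧ -α = ∑ i, c i • σ i)

/-- `γ` is a Coxeter element of `W`: a product, in some order, of the reflections in
the `ℓ` simple roots of some simple system of the root system `Φ`. -/
def IsCoxeterElement (W : Subgroup (V ≃ₗᵢ[ℝ] V)) (Φ : Set V) (ℓ : ℕ) (γ : W) : Prop :=
  ∃ σ : Fin ℓ → V, IsSimpleSystem Φ σ ∧
    ∃ t : Fin ℓ → W, (∀ i, reflFormula (σ i) (t i).1) ∧
      ∃ l : List (Fin ℓ), l.Nodup ∧ (∀ i, i ∈ l) ∧ (l.map t).prod = γ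

/-- `l` is a maximal (saturated) chain from `u` to `v` in the absolute order. -/
def IsMaximalChain (W : Subgroup (V ≃ₗᵢ[ℝ] V)) (u v : W) (l : List W) : Prop :=
  l.head? = some u ∧ l.getLast? = some v ∧ l.Chain' (covers W)

/-- The label of a chain under the natural edge labeling `λ (x, y) = x⁻¹ * y`. -/
def chainLabels (W : Subgroup (V ≃ₗᵢ[ℝ] V)) (l : List W) : List W :=
  l.zipWith (fun x y => x⁻¹ * y) l.tail

end

/-!
Let `t = x⁻¹ * y` be the label of a cover `x ⋖ y` of the chain, so `u ≤ x ⋖ y ≤ v`. Reflection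
length is additive along `u⁻¹ * v = (u⁻¹ * x) * t * (y⁻¹ * v)`, and since it is invariant under
conjugation, moving `t` to the front (`t⁻¹ * (u⁻¹ * v) = (t⁻¹ * (u⁻¹ * x) * t) * (y⁻¹ * v)`)
shows `t ≤ u⁻¹ * v`. Hence `u ≤ u * t ≤ v` with `refLen W (u * t) = refLen W u + 1`, i.e.
`u * t` covers `u`.
-/

section

variable {V : Type*} [NormedAddCommGroup V] [InnerProductSpace ℝ V]

theorem reflFormula.inner_apply {α : V} {g : V ≃ₗᵢ[ℝ] V} (hα : α ≠ 0) (h : reflFormula α g)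
    (v : V) : ⟪α, g v⟫ = -⟪α, v⟫ := by
  have : ⟪α, α⟫ ≠ 0 := inner_self_ne_zero.mpr hα
  rw [h v, inner_sub_right, real_inner_smul_right]
  field_simp
  ring

namespace IsReflection

variable {g : V ≃ₗᵢ[ℝ] V}

theorem mul_self (hg : IsReflection g) : g * g = 1 := by
  obtain ⟨α, hα, h⟩ := hg
  ext v
  simp only [LinearIsometryEquiv.coe_mul, Function.comp_apply, LinearIsometryEquiv.coe_one,
    id_eq]
  rw [h (g v), h.inner_apply hα, h v, mul_neg, neg_div, neg_smul]
  abel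

theorem ne_one (hg : IsReflection g) : g ≠ 1 := by
  obtain ⟨α, hα, h⟩ := hg
  rintro rfl
  have hneg : ⟪α, α⟫ = -⟪α, α⟫ := h.inner_apply hα α
  have hzero : ⟪α, α⟫ = 0 := by linarith
  exact hα (inner_self_eq_zero.mp hzero)

theorem inv_eq (hg : IsReflection g) : g⁻¹ = g :=
  inv_eq_of_mul_eq_one_right hg.mul_self

theorem inv (hg : IsReflection g) : IsReflection g⁻¹ := by
  rwa [hg.inv_eq]

theorem conj (hg : IsReflection g) (h : V ≃ₗᵢ[ℝ] V) : IsReflection (h * g * h⁻¹) := by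
  obtain ⟨α, hα, hgα⟩ := hg
  refine ⟨h α, by simpa using hα, fun v => ?_⟩
  have hv : ⟪h α, v⟫ = ⟪α, h.symm v⟫ := by
    simpa using h.inner_map_map α (h.symm v)
  change h (g (h.symm v)) = _
  rw [hgα, map_sub, map_smul, h.apply_symm_apply, hv, h.inner_map_map]

end IsReflection

variable {W : Subgroup (V ≃ₗᵢ[ℝ] V)}

theorem closure_reflections_eq_top (hW : IsReflectionGroup W) :
    Subgroup.closure {t : W | IsReflection t.1} = ⊤ := by
  apply Subgroup.map_injective W.subtype_injective
  rw [MonoidHom.map_closure, ← MonoidHom.range_eq_map, Subgroup.range_subtype]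
  convert hW.2 using 2
  ext g
  simp only [Set.mem_image, Set.mem_ofPred_eq, Subgroup.coe_subtype]
  exact ⟨fun ⟨t, ht, hg⟩ => hg ▸ ⟨t.2, ht⟩, fun ⟨hgW, hg⟩ => ⟨⟨g, hgW⟩, hg, rfl⟩⟩

theorem exists_reflection_word (hW : IsReflectionGroup W) (w : W) :
    ∃ l : List W, (∀ t ∈ l, IsReflection t.1) ∧ l.prod = w := by
  have hw : w ∈ (Subgroup.closure {t : W | IsReflection t.1}).toSubmonoid := by
    rw [closure_reflections_eq_top hW]; trivial
  rw [Subgroup.closure_toSubmonoid] at hw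
  obtain ⟨l, hl, rfl⟩ := Submonoid.exists_list_of_mem_closure hw
  refine ⟨l, fun t ht => ?_, rfl⟩
  rcases hl t ht with hr | hr
  · exact hr
  · simpa using (show IsReflection (t⁻¹ : W).1 from hr).inv

theorem exists_reduced_word (hW : IsReflectionGroup W) (w : W) :
    ∃ l : List W, (∀ t ∈ l, IsReflection t.1) ∧ l.prod = w ∧ l.length = refLen W w := by
  obtain ⟨l, hl, hw⟩ := exists_reflection_word hW w
  have hne : {k | ∃ l : List W, l.length = k ∧ (∀ t ∈ l, IsReflection t.1) ∧
      l.prod = w}.Nonempty := ⟨l.length, l, rfl, hl, hw⟩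
  obtain ⟨l', hlen, hl', hw'⟩ := Nat.sInf_mem hne
  exact ⟨l', hl', hw', hlen⟩

theorem refLen_le_length {l : List W} (hl : ∀ t ∈ l, IsReflection t.1) :
    refLen W l.prod ≤ l.length :=
  Nat.sInf_le ⟨l, rfl, hl, rfl⟩

theorem refLen_one : refLen W 1 = 0 :=
  Nat.le_zero.mp (refLen_le_length (l := []) (by simp))

theorem refLen_eq_zero (hW : IsReflectionGroup W) {w : W} : refLen W w = 0 ↔ w = 1 := by
  refine ⟨fun h => ?_, fun h => h ▸ refLen_one⟩
  obtain ⟨l, -, rfl, hlen⟩ := exists_reduced_word hW w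
  rw [h, List.length_eq_zero_iff] at hlen
  simp [hlen]

theorem refLen_mul_le (hW : IsReflectionGroup W) (a b : W) :
    refLen W (a * b) ≤ refLen W a + refLen W b := by
  obtain ⟨la, hla, rfl, hlena⟩ := exists_reduced_word hW a
  obtain ⟨lb, hlb, rfl, hlenb⟩ := exists_reduced_word hW b
  have h := refLen_le_length (l := la ++ lb) fun t ht =>
    (List.mem_append.mp ht).elim (hla t) (hlb t)
  rw [List.prod_append, List.length_append] at h
  omega

theorem refLen_le_add_refLen_inv_mul (hW : IsReflectionGroup W) (u v : W) :
    refLen W v ≤ refLen W u + refLen W (u⁻¹ * v) := by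
  simpa using refLen_mul_le hW u (u⁻¹ * v)

theorem refLen_conj_le (hW : IsReflectionGroup W) (g a : W) :
    refLen W (g * a * g⁻¹) ≤ refLen W a := by
  obtain ⟨l, hl, rfl, hlen⟩ := exists_reduced_word hW a
  have h := refLen_le_length (l := l.map (MulAut.conj g)) fun t ht => by
    obtain ⟨s, hs, rfl⟩ := List.mem_map.mp ht
    exact (hl s hs).conj g.1
  rwa [← map_list_prod, MulAut.conj_apply, List.length_map, hlen] at h

theorem refLen_eq_one (hW : IsReflectionGroup W) {w : W} :
    refLen W w = 1 ↔ IsReflection w.1 := by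
  constructor
  · intro h
    obtain ⟨l, hl, rfl, hlen⟩ := exists_reduced_word hW w
    obtain ⟨t, rfl⟩ := List.length_eq_one_iff.mp (hlen.trans h)
    simpa using hl t (by simp)
  · intro h
    have hle : refLen W w ≤ 1 := by simpa using refLen_le_length (l := [w]) (by simpa using h)
    have hne : refLen W w ≠ 0 := fun h0 =>
      h.ne_one (by rw [(refLen_eq_zero hW).mp h0]; rfl)
    omega

theorem absLe_refl (w : W) : absLe W w w := by
  rw [absLe, inv_mul_cancel, refLen_one, add_zero]

theorem absLe_trans (hW : IsReflectionGroup W) {a b c : W} (hab : absLe W a b)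
    (hbc : absLe W b c) : absLe W a c := by
  have hac := refLen_le_add_refLen_inv_mul hW a c
  have habc : refLen W (a⁻¹ * c) ≤ refLen W (a⁻¹ * b) + refLen W (b⁻¹ * c) := by
    simpa [mul_assoc] using refLen_mul_le hW (a⁻¹ * b) (b⁻¹ * c)
  unfold absLe at *
  omega

theorem absLe_inv_mul_inv_mul (hW : IsReflectionGroup W) {u x y v : W} (hux : absLe W u x)
    (hxy : absLe W x y) (hyv : absLe W y v) : absLe W (x⁻¹ * y) (u⁻¹ * v) := by
  have huv : u⁻¹ * v = u⁻¹ * x * (x⁻¹ * y) * (y⁻¹ * v) := by group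
  have hsuv : (x⁻¹ * y)⁻¹ * (u⁻¹ * v) =
      (x⁻¹ * y)⁻¹ * (u⁻¹ * x) * (x⁻¹ * y)⁻¹⁻¹ * (y⁻¹ * v) := by group
  have h₁ : refLen W (u⁻¹ * v) ≤
      refLen W (u⁻¹ * x) + refLen W (x⁻¹ * y) + refLen W (y⁻¹ * v) := by
    rw [huv]
    exact (refLen_mul_le hW _ _).trans (by gcongr; exact refLen_mul_le hW _ _)
  have h₂ : refLen W ((x⁻¹ * y)⁻¹ * (u⁻¹ * v)) ≤ refLen W (u⁻¹ * x) + refLen W (y⁻¹ * v) := by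
    rw [hsuv]
    exact (refLen_mul_le hW _ _).trans (by gcongr; exact refLen_conj_le hW _ _)
  have h₃ := refLen_le_add_refLen_inv_mul hW u v
  have h₄ := refLen_le_add_refLen_inv_mul hW (x⁻¹ * y) (u⁻¹ * v)
  unfold absLe at *
  omega

theorem absLe_mul_of_absLe_inv_mul (hW : IsReflectionGroup W) {u v s : W} (huv : absLe W u v)
    (hs : absLe W s (u⁻¹ * v)) : absLe W u (u * s) ∧ absLe W (u * s) v := by
  have h₁ := refLen_mul_le hW u s
  have h₂ := refLen_le_add_refLen_inv_mul hW (u * s) v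
  have hrest : (u * s)⁻¹ * v = s⁻¹ * (u⁻¹ * v) := by group
  unfold absLe at *
  rw [inv_mul_cancel_left]
  rw [hrest] at h₂ ⊢
  omega

theorem exists_reflection_absLe (hW : IsReflectionGroup W) {w : W} (hw : w ≠ 1) :
    ∃ t : W, IsReflection t.1 ∧ absLe W t w := by
  obtain ⟨_ | ⟨t, l⟩, hl, rfl, hlen⟩ := exists_reduced_word hW w
  · exact absurd rfl hw
  have ht : IsReflection t.1 := hl t (by simp)
  refine ⟨t, ht, ?_⟩
  have hrest := refLen_le_length (fun s hs => hl s (List.mem_cons_of_mem t hs))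
  have htl := refLen_le_add_refLen_inv_mul hW t (t * l.prod)
  rw [List.prod_cons, List.length_cons] at hlen
  rw [inv_mul_cancel_left, (refLen_eq_one hW).mpr ht] at htl
  rw [absLe, (refLen_eq_one hW).mpr ht, List.prod_cons, inv_mul_cancel_left]
  omega

theorem covers.isReflection_inv_mul (hW : IsReflectionGroup W) {x y : W} (h : covers W x y) :
    IsReflection (x⁻¹ * y).1 := by
  obtain ⟨hxy, hne, hmax⟩ := h
  obtain ⟨t, ht, htxy⟩ := exists_reflection_absLe hW (w := x⁻¹ * y)
    (fun h => hne (inv_mul_eq_one.mp h))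
  obtain ⟨hxt, hty⟩ := absLe_mul_of_absLe_inv_mul hW hxy htxy
  rcases hmax (x * t) hxt hty with h | h
  · exact absurd (mul_eq_left.mp h) (fun h1 => ht.ne_one (by rw [h1]; rfl))
  · rwa [← h, inv_mul_cancel_left]

theorem covers_mul_of_isReflection (hW : IsReflectionGroup W) {u t : W} (ht : IsReflection t.1)
    (h : absLe W u (u * t)) : covers W u (u * t) := by
  refine ⟨h, fun h1 => ht.ne_one ?_, fun z huz hzt => ?_⟩
  · rw [left_eq_mul.mp h1]; rfl
  have hlen : refLen W (u * t) = refLen W u + 1 := by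
    rw [← h, inv_mul_cancel_left, (refLen_eq_one hW).mpr ht]
  unfold absLe at huz hzt
  rcases Nat.eq_zero_or_pos (refLen W (u⁻¹ * z)) with h0 | h0
  · exact .inl (inv_mul_eq_one.mp ((refLen_eq_zero hW).mp h0)).symm
  · exact .inr (inv_mul_eq_one.mp ((refLen_eq_zero hW).mp (by omega)))

namespace IsMaximalChain

theorem of_cons_cons {u b v : W} {l : List W} (h : IsMaximalChain W u v (u :: b :: l)) :
    covers W u b ∧ IsMaximalChain W b v (b :: l) := by
  obtain ⟨-, hlast, hchain⟩ := h
  rw [List.getLast?_cons_cons] at hlast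
  exact ⟨(List.isChain_cons_cons.mp hchain).1, rfl, hlast, (List.isChain_cons_cons.mp hchain).2⟩

theorem absLe (hW : IsReflectionGroup W) {u v : W} {l : List W} (h : IsMaximalChain W u v l) :
    absLe W u v := by
  induction l generalizing u with
  | nil => simp [IsMaximalChain] at h
  | cons a l ih =>
    obtain rfl : a = u := by simpa using h.1
    cases l with
    | nil =>
      obtain rfl : a = v := by simpa using h.2.1
      exact absLe_refl a
    | cons b l =>
      obtain ⟨hab, hb⟩ := h.of_cons_cons
      exact absLe_trans hW hab.1 (ih hb)

theorem exists_covers_of_mem_chainLabels (hW : IsReflectionGroup W) {u v t : W} {l : List W}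
    (h : IsMaximalChain W u v l) (ht : t ∈ chainLabels W l) :
    ∃ x y : W, _root_.absLe W u x ∧ covers W x y ∧ _root_.absLe W y v ∧ x⁻¹ * y = t := by
  induction l generalizing u with
  | nil => simp [chainLabels] at ht
  | cons a l ih =>
    obtain rfl : a = u := by simpa using h.1
    cases l with
    | nil => simp [chainLabels] at ht
    | cons b l =>
      obtain ⟨hab, hb⟩ := h.of_cons_cons
      rcases List.mem_cons.mp ht with rfl | ht
      · exact ⟨a, b, absLe_refl a, hab, hb.absLe hW, rfl⟩
      · obtain ⟨x, y, hbx, hxy, hyv, rfl⟩ := ih hb ht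
        exact ⟨x, y, absLe_trans hW hab.1 hbx, hxy, hyv, rfl⟩

end IsMaximalChain

end

theorem statement9_general {V : Type*} [NormedAddCommGroup V] [InnerProductSpace ℝ V]
    (W : Subgroup (V ≃ₗᵢ[ℝ] V)) (hW : IsReflectionGroup W)
    (u v : W) (huv : absLe W u v)
    (l : List W) (hl : IsMaximalChain W u v l)
    (t : W) (ht : t ∈ chainLabels W l) :
    ∃ u' : W, covers W u u' ∧ absLe W u' v ∧ u⁻¹ * u' = t := by
  obtain ⟨x, y, hux, hxy, hyv, rfl⟩ := hl.exists_covers_of_mem_chainLabels hW ht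
  obtain ⟨hut, hutv⟩ :=
    absLe_mul_of_absLe_inv_mul hW huv (absLe_inv_mul_inv_mul hW hux hxy.1 hyv)
  exact ⟨u * (x⁻¹ * y), covers_mul_of_isReflection hW (hxy.isReflection_inv_mul hW) hut, hutv,
    inv_mul_cancel_left u _⟩

/-- If a reflection `t` appears as a coordinate of the label of some maximal chain of
an interval `[u, v]` in `NC_W(γ)`, then `t = u⁻¹ * u'` for some `u'` covering `u`
in `[u, v]`. -/
theorem statement9 {V : Type*} [NormedAddCommGroup V] [InnerProductSpace ℝ V]
    [FiniteDimensional ℝ V]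
    (W : Subgroup (V ≃ₗᵢ[ℝ] V)) (hW : IsReflectionGroup W)
    (Φ : Set V) (hΦ : IsRootSystemFor W Φ)
    (γ : W) (hγ : IsCoxeterElement W Φ (Module.finrank ℝ V) γ)
    (u v : W) (huv : absLe W u v) (hvγ : absLe W v γ)
    (l : List W) (hl : IsMaximalChain W u v l)
    (t : W) (ht : t ∈ chainLabels W l) :
    ∃ u' : W, covers W u u' ∧ absLe W u' v ∧ u⁻¹ * u' = t :=
  statement9_general W hW u v huv l hl t ht
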